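/- Let B ∈ ℝ^{m×n} be a NAE3SAT clause matrix, and let A ∈ ℝ^{(m+3n)×3n} be the block matrix whose blocks, from top to bottom, are [⅓B ⅓B ⅓B], [I_n I_n −I_n], [I_n −I_n I_n], and [−I_n I_n I_n]. If lindisc(A) < 3/2, then there exists ψ ∈ {0,1}ⁿ that NAE-satisfies B, i.e. ‖B((1/2)·1 − ψ)‖_∞ ≤ 1/2. -/

import Mathlib

/-- The block matrix `A` with row blocks `[⅓B ⅓B ⅓B]`, `[I I -I]`, `[I -I I]`, `[-I I I]`. -/
noncomputable def Amat {m n : ℕ} (B : Matrix (Fin m) (Fin n) ℝ) :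
    Matrix (Fin m ⊕ (Fin n ⊕ Fin n ⊕ Fin n)) (Fin n ⊕ Fin n ⊕ Fin n) ℝ :=
  Matrix.of fun r c =>
    match r with
    | Sum.inl j => (1 / 3) * B j (Sum.elim id (Sum.elim id id) c)
    | Sum.inr (Sum.inl k) =>
        Sum.elim (fun i => if k = i then (1 : ℝ) else 0)
          (Sum.elim (fun i => if k = i then (1 : ℝ) else 0)
            (fun i => if k = i then (-1 : ℝ) else 0)) c
    | Sum.inr (Sum.inr (Sum.inl k)) =>
        Sum.elim (fun i => if k = i then (1 : ℝ) else 0)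
          (Sum.elim (fun i => if k = i then (-1 : ℝ) else 0)
            (fun i => if k = i then (1 : ℝ) else 0)) c
    | Sum.inr (Sum.inr (Sum.inr k)) =>
        Sum.elim (fun i => if k = i then (-1 : ℝ) else 0)
          (Sum.elim (fun i => if k = i then (1 : ℝ) else 0)
            (fun i => if k = i then (1 : ℝ) else 0)) c

/-- `B` is a NAE3SAT clause matrix: each row is `b₁e^{i₁} + b₂e^{i₂} + b₃e^{i₃}`
with signs `b₁,b₂,b₃ ∈ {-1,1}`. -/
def IsNAEClauseMatrix {m n : ℕ} (B : Matrix (Fin m) (Fin n) ℝ) : Prop :=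
  ∃ (i1 i2 i3 : Fin m → Fin n) (b1 b2 b3 : Fin m → ℝ),
    (∀ j, (b1 j = -1 ∨ b1 j = 1) ∧ (b2 j = -1 ∨ b2 j = 1) ∧ (b3 j = -1 ∨ b3 j = 1)) ∧
    (∀ j i, B j i = (if i1 j = i then b1 j else 0) + (if i2 j = i then b2 j else 0) +
      (if i3 j = i then b3 j else 0))

/-- `ψ ∈ {0,1}ⁿ` NAE-satisfies `B` if `‖B((1/2)·1 - ψ)‖_∞ ≤ 1/2`. -/
def NAESatisfies {m n : ℕ} (B : Matrix (Fin m) (Fin n) ℝ) (ψ : Fin n → ℝ) : Prop :=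
  (∀ i, ψ i = 0 ∨ ψ i = 1) ∧ ‖B.mulVec ((fun _ => (1 : ℝ) / 2) - ψ)‖ ≤ 1 / 2

/-- The linear discrepancy of a matrix. -/
noncomputable def lindisc {I J : Type*} [Fintype I] [Fintype J] (A : Matrix I J ℝ) : ℝ :=
  ⨆ w : {w : J → ℝ // ∀ j, w j ∈ Set.Icc (0 : ℝ) 1},
    ⨅ x : {x : J → ℝ // ∀ j, x j = 0 ∨ x j = 1}, ‖A.mulVec (w.1 - x.1)‖

/-!
Feed the fractional point `w = ½·𝟙` to the hypothesis: some `0/1` rounding `x` has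
`‖A (w - x)‖_∞ < 3/2`, and `v = w - x` has entries `±½`. On the rows `[I I -I]`, `[I -I I]`,
`[-I I I]` a disagreement among the three copies of a coordinate produces `±3/2`, so
`v = (u, u, u)`. The top block then reads `B u`, and a sum of three `±½`s that is below `3/2`
in absolute value is `±½`; hence `ψ = ½·𝟙 - u` NAE-satisfies `B`.
-/

open Matrix

section lindisc

attribute [local instance] Matrix.linftyOpSeminormedAddCommGroup

variable {I J : Type*} [Fintype I] [Fintype J]

lemma exists_rounding_lt_of_lindisc_lt {A : Matrix I J ℝ} {c : ℝ} (h : lindisc A < c)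
    (w : J → ℝ) (hw : ∀ j, w j ∈ Set.Icc (0 : ℝ) 1) :
    ∃ x : J → ℝ, (∀ j, x j = 0 ∨ x j = 1) ∧ ‖A *ᵥ (w - x)‖ < c := by
  have : Nonempty {x : J → ℝ // ∀ j, x j = 0 ∨ x j = 1} :=
    ⟨⟨0, fun _ => Or.inl rfl⟩⟩
  have hbdd : BddAbove (Set.range fun w : {w : J → ℝ // ∀ j, w j ∈ Set.Icc (0 : ℝ) 1} =>
      ⨅ x : {x : J → ℝ // ∀ j, x j = 0 ∨ x j = 1}, ‖A *ᵥ (w.1 - x.1)‖) := by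
    refine ⟨‖A‖, ?_⟩
    rintro _ ⟨w, rfl⟩
    calc (⨅ x : {x : J → ℝ // ∀ j, x j = 0 ∨ x j = 1}, ‖A *ᵥ (w.1 - x.1)‖)
        ≤ ‖A *ᵥ (w.1 - 0)‖ :=
          ciInf_le
            (f := fun x : {x : J → ℝ // ∀ j, x j = 0 ∨ x j = 1} => ‖A *ᵥ (w.1 - x.1)‖)
            ⟨0, by rintro _ ⟨x, rfl⟩; exact norm_nonneg _⟩ ⟨0, fun _ => Or.inl rfl⟩
      _ ≤ ‖A‖ * ‖w.1‖ := by rw [sub_zero]; exact Matrix.linfty_opNorm_mulVec A w.1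
      _ ≤ ‖A‖ * 1 := by
          refine mul_le_mul_of_nonneg_left ?_ (norm_nonneg A)
          exact (pi_norm_le_iff_of_nonneg zero_le_one).2 fun j =>
            abs_le.2 ⟨by linarith [(w.2 j).1], (w.2 j).2⟩
      _ = ‖A‖ := mul_one _
  obtain ⟨x, hx⟩ := exists_lt_of_ciInf_lt ((le_ciSup hbdd ⟨w, hw⟩).trans_lt h)
  exact ⟨x.1, x.2, hx⟩

end lindisc

lemma eq_and_eq_of_abs_lt_three_halves {s₁ s₂ s₃ : ℝ}
    (h₁ : s₁ = -(1 / 2) ∨ s₁ = 1 / 2) (h₂ : s₂ = -(1 / 2) ∨ s₂ = 1 / 2)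
    (h₃ : s₃ = -(1 / 2) ∨ s₃ = 1 / 2) (e₁ : |s₁ + s₂ - s₃| < 3 / 2)
    (e₂ : |s₁ - s₂ + s₃| < 3 / 2) (e₃ : |-s₁ + s₂ + s₃| < 3 / 2) :
    s₂ = s₁ ∧ s₃ = s₁ := by
  rw [abs_lt] at e₁ e₂ e₃
  rcases h₁ with rfl | rfl <;> rcases h₂ with rfl | rfl <;> rcases h₃ with rfl | rfl <;>
    constructor <;> first | rfl | linarith

lemma abs_add_add_le_half_of_lt {t₁ t₂ t₃ : ℝ} (h₁ : t₁ = -(1 / 2) ∨ t₁ = 1 / 2)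
    (h₂ : t₂ = -(1 / 2) ∨ t₂ = 1 / 2) (h₃ : t₃ = -(1 / 2) ∨ t₃ = 1 / 2)
    (e : |t₁ + t₂ + t₃| < 3 / 2) : |t₁ + t₂ + t₃| ≤ 1 / 2 := by
  rw [abs_lt] at e
  rw [abs_le]
  rcases h₁ with rfl | rfl <;> rcases h₂ with rfl | rfl <;> rcases h₃ with rfl | rfl <;>
    constructor <;> linarith

lemma IsNAEClauseMatrix.abs_mulVec_le_half {m n : ℕ} {B : Matrix (Fin m) (Fin n) ℝ}
    (hB : IsNAEClauseMatrix B) {u : Fin n → ℝ} (hu : ∀ i, u i = -(1 / 2) ∨ u i = 1 / 2)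
    (j : Fin m) (h : |(B *ᵥ u) j| < 3 / 2) : |(B *ᵥ u) j| ≤ 1 / 2 := by
  obtain ⟨i₁, i₂, i₃, b₁, b₂, b₃, hb, hBrow⟩ := hB
  have hrow : (B *ᵥ u) j = b₁ j * u (i₁ j) + b₂ j * u (i₂ j) + b₃ j * u (i₃ j) := by
    simp [mulVec, dotProduct, hBrow, add_mul, ite_mul, Finset.sum_add_distrib]
  have hterm : ∀ (b : ℝ) (i : Fin n), (b = -1 ∨ b = 1) →
      b * u i = -(1 / 2) ∨ b * u i = 1 / 2 := by
    rintro b i (rfl | rfl) <;> rcases hu i with hui | hui <;> rw [hui] <;> norm_num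
  rw [hrow] at h ⊢
  exact abs_add_add_le_half_of_lt (hterm _ _ (hb j).1) (hterm _ _ (hb j).2.1)
    (hterm _ _ (hb j).2.2) h

section Amat

variable {m n : ℕ} (B : Matrix (Fin m) (Fin n) ℝ)

lemma Amat_mulVec_inr_inl (v : Fin n ⊕ Fin n ⊕ Fin n → ℝ) (k : Fin n) :
    (Amat B *ᵥ v) (.inr (.inl k)) = v (.inl k) + v (.inr (.inl k)) - v (.inr (.inr k)) := by
  simp [Amat, mulVec, dotProduct, Fintype.sum_sum_type, ite_mul]
  ring

lemma Amat_mulVec_inr_inr_inl (v : Fin n ⊕ Fin n ⊕ Fin n → ℝ) (k : Fin n) :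
    (Amat B *ᵥ v) (.inr (.inr (.inl k))) =
      v (.inl k) - v (.inr (.inl k)) + v (.inr (.inr k)) := by
  simp [Amat, mulVec, dotProduct, Fintype.sum_sum_type, ite_mul]
  ring

lemma Amat_mulVec_inr_inr_inr (v : Fin n ⊕ Fin n ⊕ Fin n → ℝ) (k : Fin n) :
    (Amat B *ᵥ v) (.inr (.inr (.inr k))) =
      -v (.inl k) + v (.inr (.inl k)) + v (.inr (.inr k)) := by
  simp [Amat, mulVec, dotProduct, Fintype.sum_sum_type, ite_mul]
  ring

lemma Amat_mulVec_elim_inl (u : Fin n → ℝ) (j : Fin m) :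
    (Amat B *ᵥ Sum.elim u (Sum.elim u u)) (.inl j) = (B *ᵥ u) j := by
  simp only [Amat, mulVec, dotProduct, Fintype.sum_sum_type, of_apply, Sum.elim_inl,
    Sum.elim_inr, id, mul_assoc, ← Finset.mul_sum]
  ring

lemma eq_elim_of_norm_Amat_mulVec_lt {v : Fin n ⊕ Fin n ⊕ Fin n → ℝ}
    (hv : ∀ c, v c = -(1 / 2) ∨ v c = 1 / 2) (h : ‖Amat B *ᵥ v‖ < 3 / 2) :
    v = Sum.elim (v ∘ .inl) (Sum.elim (v ∘ .inl) (v ∘ .inl)) := by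
  have hrow (r) : |(Amat B *ᵥ v) r| < 3 / 2 := (norm_le_pi_norm _ r).trans_lt h
  have hcopies (k : Fin n) := eq_and_eq_of_abs_lt_three_halves (hv _) (hv _) (hv _)
    (Amat_mulVec_inr_inl B v k ▸ hrow _) (Amat_mulVec_inr_inr_inl B v k ▸ hrow _)
    (Amat_mulVec_inr_inr_inr B v k ▸ hrow _)
  ext (k | k | k)
  · rfl
  · exact (hcopies k).1
  · exact (hcopies k).2

end Amat

/-- Soundness of the NP-hardness reduction: if `lindisc(A) < 3/2` then `B` has a
NAE-satisfying assignment. -/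
theorem reduction_soundness {m n : ℕ} (B : Matrix (Fin m) (Fin n) ℝ)
    (hB : IsNAEClauseMatrix B) (h : lindisc (Amat B) < 3 / 2) :
    ∃ ψ : Fin n → ℝ, NAESatisfies B ψ := by
  obtain ⟨x, hx, hAx⟩ :=
    exists_rounding_lt_of_lindisc_lt h (fun _ => 1 / 2) fun _ => ⟨by norm_num, by norm_num⟩
  set v := (fun _ => (1 : ℝ) / 2) - x with hv_def
  have hv (c) : v c = -(1 / 2) ∨ v c = 1 / 2 := by
    rcases hx c with hc | hc <;> norm_num [hv_def, hc]
  have hv_elim := eq_elim_of_norm_Amat_mulVec_lt B hv hAx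
  refine ⟨x ∘ .inl, fun i => hx _, (pi_norm_le_iff_of_nonneg (by norm_num)).2 fun j => ?_⟩
  have hj : |(Amat B *ᵥ v) (.inl j)| < 3 / 2 := (norm_le_pi_norm _ _).trans_lt hAx
  rw [hv_elim, Amat_mulVec_elim_inl] at hj
  exact hB.abs_mulVec_le_half (fun i => hv _) j hj
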